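/- arXiv:0904.4739 — 6 statements merged into one kernel-verified Lean document; each statement's English description precedes it below -/
import Mathlib

section
/- Let X be a locally path connected topological space. Then the topological fundamental group π₁^top(X,x) is discrete for every x ∈ X if and only if X is semilocally simply-connected. -/
attribute [local instance] Path.Homotopic.setoid

/-- The topological fundamental group: homotopy classes of loops at `x` with the
quotient topology induced from the compact-open topology on the loop space. -/
instance piTopTopology {X : Type*} [TopologicalSpace X] (x y : X) :
    TopologicalSpace (Path.Homotopic.Quotient x y) :=
  inferInstanceAs (TopologicalSpace (Quotient (Path.Homotopic.setoid x y)))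

/-- `X` is semilocally simply-connected: every point has an open neighborhood `U`
such that the inclusion-induced homomorphism `π₁(U,x) → π₁(X,x)` is trivial, i.e.
every loop in `U` based at `x` is null-homotopic in `X`. -/
def SemilocallySimplyConnected (X : Type*) [TopologicalSpace X] : Prop :=
  ∀ x : X, ∃ (U : Set X) (_ : IsOpen U) (hx : x ∈ U),
    ∀ γ : Path (⟨x, hx⟩ : U) (⟨x, hx⟩ : U),
      (γ.map continuous_subtype_val).Homotopic (Path.refl x)

/-!
If `π₁(X, x)` is discrete, the class of the constant loop is open, and every compact-open
neighbourhood of a constant map contains all maps with values in some neighbourhood `U` of `x`;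
so loops in `U` are null-homotopic.

Conversely, semilocal simple connectivity and local path-connectedness give around every point an
open set `W` in which any two paths with the same endpoints are homotopic in `X`. Subdivide a path
`δ` so that its `k`-th piece lies in such a set `W k`. The paths `η` whose `k`-th piece also lies
in `W k` and whose subdivision points lie in the path component of `δ (t k)` in
`W (k - 1) ∩ W k` form a neighbourhood of `δ`. Junction paths between `δ (t k)` and `η (t k)`
cut the comparison of `δ` and `η` into a ladder of squares, each inside one `W k`, so `η ≃ δ`.
-/

open Set Filter Topology unitInterval

theorem ContinuousMap.exists_mem_nhds_forall_range_subset_of_mem_nhds_const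
    {Y X : Type*} [TopologicalSpace Y] [TopologicalSpace X] {x : X} {V : Set C(Y, X)}
    (hV : V ∈ 𝓝 (ContinuousMap.const Y x)) :
    ∃ U ∈ 𝓝 x, ∀ g : C(Y, X), range g ⊆ U → g ∈ V := by
  have hmono : Monotone fun U : Set X => {g : C(Y, X) | range g ⊆ U} :=
    fun _ _ hUU' _ hg => hg.trans hUU'
  have hle : Tendsto id ((𝓝 x).lift' fun U => {g : C(Y, X) | range g ⊆ U})
      (𝓝 (ContinuousMap.const Y x)) := by
    refine tendsto_nhds_compactOpen.2 fun K _ U hU hxU => ?_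
    rcases K.eq_empty_or_nonempty with rfl | ⟨y, hy⟩
    · exact Eventually.of_forall fun _ => mapsTo_empty _ _
    · exact mem_lift' (hU.mem_nhds (hxU hy)) |> mem_of_superset <|
        fun g hg _ _ => hg (mem_range_self _)
  exact (mem_lift'_sets hmono).1 (hle hV)

section

variable {X : Type*} [TopologicalSpace X]

theorem Path.exists_isOpen_forall_range_subset_of_mem_nhds_refl {x : X} {V : Set (Path x x)}
    (hV : V ∈ 𝓝 (Path.refl x)) :
    ∃ U, IsOpen U ∧ x ∈ U ∧ ∀ γ : Path x x, range γ ⊆ U → γ ∈ V := by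
  obtain ⟨V', hV', hV'V⟩ := (mem_nhds_induced _ _ _).1 hV
  obtain ⟨U, hU, hUV'⟩ :=
    ContinuousMap.exists_mem_nhds_forall_range_subset_of_mem_nhds_const hV'
  obtain ⟨U', hU'U, hU', hxU'⟩ := mem_nhds_iff.1 hU
  exact ⟨U', hU', hxU', fun γ hγ => hV'V (hUV' γ (hγ.trans hU'U))⟩

theorem SemilocallySimplyConnected.of_discreteTopology
    (h : ∀ x : X, DiscreteTopology (Path.Homotopic.Quotient x x)) :
    SemilocallySimplyConnected X := by
  intro x
  have hnull : {γ : Path x x | γ.Homotopic (Path.refl x)} ∈ 𝓝 (Path.refl x) :=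
    mem_of_superset (((isOpen_discrete {Path.Homotopic.Quotient.mk (Path.refl x)}).preimage
      continuous_quotient_mk').mem_nhds rfl) fun _ => Path.Homotopic.Quotient.exact
  obtain ⟨U, hU, hxU, hUnull⟩ := Path.exists_isOpen_forall_range_subset_of_mem_nhds_refl hnull
  exact ⟨U, hU, hxU, fun γ => hUnull _ (range_subset_iff.2 fun t => (γ t).2)⟩

namespace Path.Homotopic.Quotient

variable {x₀ x₁ x₂ : X}

@[simp]
theorem symm_trans_cancel_left (γ : Path.Homotopic.Quotient x₀ x₁)
    (δ : Path.Homotopic.Quotient x₁ x₂) : γ.symm.trans (γ.trans δ) = δ := by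
  rw [← trans_assoc, symm_trans, refl_trans]

@[simp]
theorem trans_symm_cancel_left (γ : Path.Homotopic.Quotient x₀ x₁)
    (δ : Path.Homotopic.Quotient x₀ x₂) : γ.trans (γ.symm.trans δ) = δ := by
  rw [← trans_assoc, trans_symm, refl_trans]

end Path.Homotopic.Quotient

/-- Equivalently, `π₁(W, w) → π₁(X, w)` is trivial for every `w ∈ W`. -/
def IsRelSimplyConnected (W : Set X) : Prop :=
  ∀ ⦃a b : X⦄ (p q : Path a b), range p ⊆ W → range q ⊆ W → p.Homotopic q

theorem IsPathConnected.isRelSimplyConnected {W : Set X} (hW : IsPathConnected W) {y : X}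
    (hy : y ∈ W) (hnull : ∀ γ : Path y y, range γ ⊆ W → γ.Homotopic (Path.refl y)) :
    IsRelSimplyConnected W := by
  intro a b p q hp hq
  have ha : a ∈ W := by simpa using hp (mem_range_self 0)
  obtain ⟨r, hr⟩ := hW.joinedIn y hy a ha
  replace hr : range r ⊆ W := range_subset_iff.2 hr
  have hloop := hnull (((r.trans p).trans q.symm).trans r.symm) <| by
    simp only [Path.trans_range, Path.symm_range]
    exact union_subset (union_subset (union_subset hr hp) hq) hr
  rw [← Path.Homotopic.Quotient.eq] at hloop ⊢
  simp only [Path.Homotopic.Quotient.mk_trans, Path.Homotopic.Quotient.mk_symm,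
    Path.Homotopic.Quotient.mk_refl] at hloop
  set P := Path.Homotopic.Quotient.mk p
  set Q := Path.Homotopic.Quotient.mk q
  set R := Path.Homotopic.Quotient.mk r
  calc P = R.symm.trans ((((R.trans P).trans Q.symm).trans R.symm).trans (R.trans Q)) := by
        simp
    _ = Q := by rw [hloop]; simp

theorem SemilocallySimplyConnected.exists_isOpen_isRelSimplyConnected
    [LocallyPathConnectedSpace X] (h : SemilocallySimplyConnected X) (y : X) :
    ∃ W, IsOpen W ∧ y ∈ W ∧ IsRelSimplyConnected W := by
  obtain ⟨U, hU, hyU, hUnull⟩ := h y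
  refine ⟨pathComponentIn U y, hU.pathComponentIn y, mem_pathComponentIn_self hyU,
    (isPathConnected_pathComponentIn hyU).isRelSimplyConnected (mem_pathComponentIn_self hyU)
      fun γ hγ => ?_⟩
  have hγU : ∀ t, γ t ∈ U := fun t => pathComponentIn_subset (hγ (mem_range_self t))
  exact hUnull
    { toFun t := ⟨γ t, hγU t⟩
      source' := by simp
      target' := by simp }
namespace Path.Homotopic

theorem subpath_trans_of_subpath_trans {a b a' b' : X} (δ : Path a b) (η : Path a' b')
    (t : ℕ → I) (c : ∀ k, Path (δ (t k)) (η (t k))) (n : ℕ)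
    (hsq : ∀ k < n, ((δ.subpath (t k) (t (k + 1))).trans (c (k + 1))).Homotopic
      ((c k).trans (η.subpath (t k) (t (k + 1))))) :
    ((δ.subpath (t 0) (t n)).trans (c n)).Homotopic ((c 0).trans (η.subpath (t 0) (t n))) := by
  induction n with
  | zero =>
    simp only [subpath_self]
    exact (refl_trans _).trans (trans_refl _).symm
  | succ n ih =>
    have ih := ih fun k hk => hsq k (hk.trans n.lt_succ_self)
    have hsqn := hsq n n.lt_succ_self
    have hδ := Quotient.eq.2 ⟨Homotopy.subpathTransSubpath δ (t 0) (t n) (t (n + 1))⟩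
    have hη := Quotient.eq.2 ⟨Homotopy.subpathTransSubpath η (t 0) (t n) (t (n + 1))⟩
    rw [← Quotient.eq] at ih hsqn ⊢
    simp only [Quotient.mk_trans] at ih hsqn hδ hη ⊢
    rw [← hδ, ← hη, Quotient.trans_assoc, hsqn, ← Quotient.trans_assoc, ih, Quotient.trans_assoc]

theorem of_subpath_trans {a b : X} {δ η : Path a b} {s₀ s₁ : I} (hs₀ : s₀ = 0) (hs₁ : s₁ = 1)
    {c₀ : Path (δ s₀) (η s₀)} {c₁ : Path (δ s₁) (η s₁)} {W₀ W₁ : Set X}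
    (hW₀ : IsRelSimplyConnected W₀) (hW₁ : IsRelSimplyConnected W₁)
    (hc₀ : range c₀ ⊆ W₀) (hc₁ : range c₁ ⊆ W₁)
    (h : ((δ.subpath s₀ s₁).trans c₁).Homotopic (c₀.trans (η.subpath s₀ s₁))) :
    δ.Homotopic η := by
  subst hs₀ hs₁
  have h₀ : c₀.Homotopic ((Path.refl a).cast δ.source η.source) :=
    hW₀ _ _ hc₀ <| by simpa using hc₀ (mem_range_self 0)
  have h₁ : c₁.Homotopic ((Path.refl b).cast δ.target η.target) :=
    hW₁ _ _ hc₁ <| by simpa using hc₁ (mem_range_self 0)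
  rw [subpath_zero_one, subpath_zero_one] at h
  have h' := (((refl _).hcomp h₁).symm.trans (h.trans (h₀.hcomp (refl _)))).pathCast
    δ.source.symm η.target.symm
  have hδ : (((δ.cast δ.source δ.target).trans ((Path.refl b).cast δ.target η.target)).cast
      δ.source.symm η.target.symm) = δ.trans (Path.refl b) := rfl
  have hη : ((((Path.refl a).cast δ.source η.source).trans (η.cast η.source η.target)).cast
      δ.source.symm η.target.symm) = (Path.refl a).trans η := rfl
  rw [hδ, hη] at h'
  exact (trans_refl δ).symm.trans (h'.trans (refl_trans η))

end Path.Homotopic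

theorem SemilocallySimplyConnected.eventually_homotopic [LocallyPathConnectedSpace X]
    (h : SemilocallySimplyConnected X) {a b : X} (δ : Path a b) :
    ∀ᶠ η in 𝓝 δ, η.Homotopic δ := by
  choose W hWo hyW hW using h.exists_isOpen_isRelSimplyConnected
  obtain ⟨t, ht0, ht_mono, ⟨n, htn⟩, ht⟩ := exists_monotone_Icc_subset_open_cover_unitInterval
    (c := fun s : I => δ ⁻¹' W (δ s)) (fun s => (hWo _).preimage δ.continuous)
    (fun s _ => mem_iUnion.2 ⟨s, hyW _⟩)
  choose s hs using ht
  set G : ℕ → Set X := fun k => W (δ (s k))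
  -- `Z 0` is a path component of `G 0`, since `0 - 1 = 0` in `ℕ`.
  set Z : ℕ → Set X := fun k => pathComponentIn (G (k - 1) ∩ G k) (δ (t k))
  have hδZ : ∀ k, δ (t k) ∈ Z k := by
    refine fun k => mem_pathComponentIn_self ⟨hs (k - 1) ?_, hs k ⟨le_rfl, ht_mono k.le_succ⟩⟩
    rcases k with _ | k
    exacts [⟨le_rfl, ht_mono zero_le_one⟩, ⟨ht_mono k.le_succ, le_rfl⟩]
  have hN : ∀ᶠ η : Path a b in 𝓝 δ, ∀ k ≤ n,
      MapsTo η (Icc (t k) (t (k + 1))) (G k) ∧ η (t k) ∈ Z k := by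
    refine (eventually_all_finite (finite_le_nat n)).2 fun k _ => .and ?_ ?_
    · exact continuous_induced_dom.tendsto δ |>.eventually <|
        ContinuousMap.eventually_mapsTo isCompact_Icc (hWo _) (hs k)
    · exact (continuous_eval_const (t k)).tendsto δ |>.eventually <|
        (((hWo _).inter (hWo _)).pathComponentIn _).mem_nhds (hδZ k)
  filter_upwards [hN] with η hη
  have hηZ : ∀ k, η (t k) ∈ Z k := by
    intro k
    rcases le_or_gt k n with hk | hk
    · exact (hη k hk).2
    · simpa [htn k hk.le] using hδZ k
  choose c hc using hηZ
  replace hc : ∀ k, range (c k) ⊆ G (k - 1) ∩ G k := fun k => range_subset_iff.2 (hc k)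
  have hsq : ∀ k < n, ((δ.subpath (t k) (t (k + 1))).trans (c (k + 1))).Homotopic
      ((c k).trans (η.subpath (t k) (t (k + 1)))) := by
    intro k hk
    have hkk := ht_mono k.le_succ
    refine hW (δ (s k)) _ _ ?_ ?_ <;>
      simp only [Path.trans_range, Path.range_subpath_of_le _ _ _ hkk, union_subset_iff,
        image_subset_iff]
    · exact ⟨hs k, (hc (k + 1)).trans inter_subset_left⟩
    · exact ⟨(hc k).trans inter_subset_right, (hη k hk.le).1⟩
  refine (Path.Homotopic.of_subpath_trans ht0 (htn n le_rfl) (hW _) (hW _)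
    ((hc 0).trans inter_subset_left) ((hc n).trans inter_subset_right)
    (Path.Homotopic.subpath_trans_of_subpath_trans δ η t c n hsq)).symm

theorem SemilocallySimplyConnected.discreteTopology [LocallyPathConnectedSpace X]
    (h : SemilocallySimplyConnected X) (x y : X) :
    DiscreteTopology (Path.Homotopic.Quotient x y) := by
  refine discreteTopology_iff_isOpen_singleton.2 fun q => ?_
  obtain ⟨γ, rfl⟩ := Path.Homotopic.Quotient.mk_surjective q
  refine isQuotientMap_quotient_mk'.isOpen_preimage.1 (isOpen_iff_eventually.2 fun η hη => ?_)
  exact (h.eventually_homotopic η).mono fun ζ hζ =>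
    Path.Homotopic.Quotient.eq.2 (hζ.trans (Path.Homotopic.Quotient.exact hη))

end

theorem discrete_iff_semilocally_simply_connected
    (X : Type*) [TopologicalSpace X] [LocallyPathConnectedSpace X] :
    (∀ x : X, DiscreteTopology (Path.Homotopic.Quotient x x)) ↔
      SemilocallySimplyConnected X :=
  ⟨SemilocallySimplyConnected.of_discreteTopology, fun h x => h.discreteTopology x x⟩
end

section
/- Let (X,x) be a pointed topological space. If the singleton {[e_x]} consisting of the class of the constant loop is open in the topological fundamental group π₁^top(X,x), then x has a relatively inessential neighborhood in X, i.e., there exists an open neighborhood U of x such that the inclusion-induced homomorphism π₁(U,x) → π₁(X,x) is trivial. -/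
/-!
A loop is homotopic to the constant loop as soon as it lies in the preimage of the open
singleton `{[e_x]}`, an open neighbourhood of `e_x` in the loop space. In the compact-open
topology, every neighbourhood of a constant map `c_x` contains all maps with image in some
open `U ∋ x`: each subbasic set `{g | g K ⊆ V}` containing `c_x` has `K = ∅` or `x ∈ V`.
Every loop in such a `U` is therefore null-homotopic in `X`.
-/

attribute [local instance] Path.Homotopic.setoid

open Filter Topology Set

theorem ContinuousMap.exists_isOpen_forall_mem_of_mem_nhds_const {α X : Type*}
    [TopologicalSpace α] [TopologicalSpace X] {x : X} {s : Set C(α, X)}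
    (hs : s ∈ 𝓝 (ContinuousMap.const α x)) :
    ∃ U, IsOpen U ∧ x ∈ U ∧ ∀ g : C(α, X), (∀ a, g a ∈ U) → g ∈ s := by
  have hmono : Monotone fun U : Set X => {g : C(α, X) | ∀ a, g a ∈ U} :=
    fun _ _ hUV _ hg a => hUV (hg a)
  have hle : (𝓝 x).lift' (fun U => {g : C(α, X) | ∀ a, g a ∈ U}) ≤
      𝓝 (ContinuousMap.const α x) := by
    rw [ContinuousMap.nhds_compactOpen]
    refine le_iInf₂ fun K _ => le_iInf₂ fun V hV => le_iInf fun hKV => le_principal_iff.2 ?_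
    rcases K.eq_empty_or_nonempty with rfl | ⟨a, ha⟩
    · simp only [mapsTo_empty, ofPred_true, univ_mem]
    · exact mem_of_superset (mem_lift' (hV.mem_nhds (hKV ha))) fun g hg b _ => hg b
  obtain ⟨U, ⟨hxU, hU⟩, hUs⟩ := ((nhds_basis_opens x).lift' hmono).mem_iff.1 (hle hs)
  exact ⟨U, hU, hxU, fun g hg => hUs hg⟩

theorem Path.exists_isOpen_forall_mem_of_mem_nhds_refl {X : Type*} [TopologicalSpace X]
    {x : X} {S : Set (Path x x)} (hS : S ∈ 𝓝 (Path.refl x)) :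
    ∃ U, IsOpen U ∧ x ∈ U ∧ ∀ γ : Path x x, (∀ t, γ t ∈ U) → γ ∈ S := by
  rw [nhds_induced] at hS
  obtain ⟨s, hs, hsS⟩ := mem_comap.1 hS
  obtain ⟨U, hU, hxU, hUs⟩ := ContinuousMap.exists_isOpen_forall_mem_of_mem_nhds_const hs
  exact ⟨U, hU, hxU, fun γ hγ => hsS (hUs _ hγ)⟩

theorem exists_relatively_inessential_nhd_of_isOpen_singleton_refl
    {X : Type*} [TopologicalSpace X] (x : X)
    (h : IsOpen ({⟦Path.refl x⟧} : Set (Path.Homotopic.Quotient x x))) :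
    ∃ (U : Set X) (_ : IsOpen U) (hx : x ∈ U),
      ∀ γ : Path (⟨x, hx⟩ : U) (⟨x, hx⟩ : U),
        (γ.map continuous_subtype_val).Homotopic (Path.refl x) := by
  have hnhds : Quotient.mk _ ⁻¹' {⟦Path.refl x⟧} ∈ 𝓝 (Path.refl x) :=
    (h.preimage continuous_quotient_mk').mem_nhds rfl
  obtain ⟨U, hU, hxU, hUS⟩ := Path.exists_isOpen_forall_mem_of_mem_nhds_refl hnhds
  exact ⟨U, hU, hxU, fun γ => Quotient.exact (hUS _ fun t => (γ t).2)⟩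
end

section
/- Let (X,x) be a pointed topological space and let f ∈ C_x(X) be a loop based at x. If X is locally path connected and semilocally simply-connected, then the singleton {[f]} is open in the topological fundamental group π₁^top(X,x); consequently π₁^top(X,x) is a discrete topological space. -/
attribute [local instance] Path.Homotopic.setoid

/-!
Every point has an open neighbourhood `V` in which any two paths with common endpoints are
homotopic in `X`: take the path component of the point in a neighbourhood `U` whose loops are
null-homotopic in `X`, and conjugate a pair of paths in it by a path in `U` back to the point.
Given a path `g`, subdivide `[0, 1]` by `0 = t₀ ≤ ⋯ ≤ tₘ = 1` so that `g [tₙ, tₙ₊₁]` lies in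
such a `Vₙ`. The paths `h` with `h [tₙ, tₙ₊₁] ⊆ Vₙ` and `h tₙ` in the path component of `g tₙ`
in `Vₙ₋₁ ∩ Vₙ` form a neighbourhood of `g` in the compact-open topology. For such `h`, join
`g tₙ` to `h tₙ` by a path `βₙ` in `Vₙ₋₁ ∩ Vₙ`; every square
`g|[tₙ, tₙ₊₁] · βₙ₊₁ ≃ βₙ · h|[tₙ, tₙ₊₁]` lies in `Vₙ`, so `g ≃ h`. Homotopy classes are
therefore open in the path space, and so are the points of its quotient `π₁(X, x)`.
-/

open Set unitInterval Topology

namespace Path.Homotopic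

variable {X : Type*} [TopologicalSpace X] {x y z : X}

theorem Quotient.eq_of_trans_symm_eq_refl {γ δ : Path.Homotopic.Quotient x y}
    (h : γ.trans δ.symm = .refl x) : γ = δ := by
  calc γ = (γ.trans δ.symm).trans δ := by simp
    _ = δ := by rw [h]; simp

theorem Quotient.trans_left_cancel {α : Path.Homotopic.Quotient x y}
    {γ δ : Path.Homotopic.Quotient y z} (h : α.trans γ = α.trans δ) : γ = δ := by
  simpa [← trans_assoc] using congrArg α.symm.trans h

theorem subpath_trans_subpath (γ : Path x y) (t₀ t₁ t₂ : I) :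
    ((γ.subpath t₀ t₁).trans (γ.subpath t₁ t₂)).Homotopic (γ.subpath t₀ t₂) :=
  ⟨Homotopy.subpathTransSubpath γ t₀ t₁ t₂⟩

-- The endpoints are variables so that they can be substituted; in use they are
-- `g (t 0)`, `g (t m)`, `h (t 0)`, `h (t m)` for a subdivision `t` of `[0, 1]`.
theorem of_cast_trans_homotopic {x₀ x₁ y₀ y₁ : X} {g h : Path x y}
    (hg₀ : x₀ = x) (hg₁ : x₁ = y) (hh₀ : y₀ = x) (hh₁ : y₁ = y)
    {β₀ : Path x₀ y₀} {β₁ : Path x₁ y₁}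
    (hβ₀ : β₀.Homotopic ((Path.refl x).cast hg₀ hh₀))
    (hβ₁ : β₁.Homotopic ((Path.refl y).cast hg₁ hh₁))
    (H : ((g.cast hg₀ hg₁).trans β₁).Homotopic (β₀.trans (h.cast hh₀ hh₁))) :
    g.Homotopic h := by
  subst hg₀ hg₁ hh₀ hh₁
  exact (trans_refl g).symm.trans <| (hcomp (refl g) hβ₁).symm.trans <|
    H.trans <| (hcomp hβ₀ (refl h)).trans (refl_trans h)

end Path.Homotopic

section

variable {X : Type*} [TopologicalSpace X]

def IsRelativelySimplyConnected (V : Set X) : Prop :=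
  ∀ ⦃p q : X⦄ (γ₁ γ₂ : Path p q), range γ₁ ⊆ V → range γ₂ ⊆ V → γ₁.Homotopic γ₂

namespace Path

variable {x y : X}

theorem subpath_trans_homotopic_of_subdivision {g h : Path x y} {t : ℕ → I} (ht : Monotone t)
    {V : ℕ → Set X} (hV : ∀ n, IsRelativelySimplyConnected (V n)) {m : ℕ}
    (hg : ∀ n < m, MapsTo g (Icc (t n) (t (n + 1))) (V n))
    (hh : ∀ n < m, MapsTo h (Icc (t n) (t (n + 1))) (V n))
    (β : ∀ n, Path (g (t n)) (h (t n)))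
    (hβ : ∀ n < m, range (β n) ⊆ V n ∧ range (β (n + 1)) ⊆ V n) :
    ∀ n ≤ m, ((g.subpath (t 0) (t n)).trans (β n)).Homotopic
      ((β 0).trans (h.subpath (t 0) (t n))) := by
  intro n hn
  rw [← Homotopic.Quotient.eq]
  induction n with
  | zero => simp
  | succ n ih =>
    have hseg : ((g.subpath (t n) (t (n + 1))).trans (β (n + 1))).Homotopic
        ((β n).trans (h.subpath (t n) (t (n + 1)))) := by
      rw [Nat.succ_le_iff] at hn
      refine hV n _ _ ?_ ?_
      · rw [trans_range, range_subpath_of_le _ _ _ (ht n.le_succ)]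
        exact union_subset (hg n hn).image_subset (hβ n hn).2
      · rw [trans_range, range_subpath_of_le _ _ _ (ht n.le_succ)]
        exact union_subset (hβ n hn).1 (hh n hn).image_subset
    have hsplit (γ : Path x y) := Homotopic.Quotient.eq.2
      (Homotopic.subpath_trans_subpath γ (t 0) (t n) (t (n + 1)))
    replace hseg := Homotopic.Quotient.eq.2 hseg
    simp only [Homotopic.Quotient.mk_trans] at ih hseg hsplit ⊢
    rw [← hsplit, ← hsplit, Homotopic.Quotient.trans_assoc, hseg,
      ← Homotopic.Quotient.trans_assoc, ih (by omega), Homotopic.Quotient.trans_assoc]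

theorem homotopic_of_subdivision {g h : Path x y} {t : ℕ → I} (ht : Monotone t) {m : ℕ}
    (ht₀ : t 0 = 0) (htm : t m = 1) {V : ℕ → Set X}
    (hV : ∀ n, IsRelativelySimplyConnected (V n))
    (hg : ∀ n, MapsTo g (Icc (t n) (t (n + 1))) (V n))
    (hh : ∀ n < m, MapsTo h (Icc (t n) (t (n + 1))) (V n))
    (β : ∀ n, Path (g (t n)) (h (t n)))
    (hβ : ∀ n, range (β n) ⊆ V n) (hβ' : ∀ n, range (β (n + 1)) ⊆ V n) :
    g.Homotopic h := by
  have H := subpath_trans_homotopic_of_subdivision ht hV (fun n _ => hg n) hh β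
    (fun n _ => ⟨hβ n, hβ' n⟩) m le_rfl
  have hsub (γ : Path x y) : γ.subpath (t 0) (t m) =
      γ.cast (by rw [ht₀, γ.source]) (by rw [htm, γ.target]) := by
    ext s
    simp [subpath, ht₀, htm]
  have hnull (n : ℕ) (z : X) (hgz : g (t n) = z) (hhz : h (t n) = z) :
      (β n).Homotopic ((Path.refl z).cast hgz hhz) := by
    refine hV n _ _ (hβ n) ?_
    rw [cast_coe, refl_range, singleton_subset_iff, ← hgz]
    exact hg n ⟨le_rfl, ht n.le_succ⟩
  rw [hsub g, hsub h] at H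
  exact Homotopic.of_cast_trans_homotopic _ _ _ _ (hnull 0 x _ _) (hnull m y _ _) H

end Path

namespace SemilocallySimplyConnected

theorem exists_isOpen_homotopic_refl (hX : SemilocallySimplyConnected X) (z : X) :
    ∃ U : Set X, IsOpen U ∧ z ∈ U ∧
      ∀ γ : Path z z, range γ ⊆ U → γ.Homotopic (Path.refl z) := by
  obtain ⟨U, hU, hzU, hloop⟩ := hX z
  refine ⟨U, hU, hzU, fun γ hγ => ?_⟩
  exact hloop ⟨⟨fun s => ⟨γ s, hγ ⟨s, rfl⟩⟩, by fun_prop⟩, Subtype.ext γ.source,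
    Subtype.ext γ.target⟩

theorem exists_isOpen_isRelativelySimplyConnected [LocallyPathConnectedSpace X]
    (hX : SemilocallySimplyConnected X) (z : X) :
    ∃ V : Set X, IsOpen V ∧ z ∈ V ∧ IsRelativelySimplyConnected V := by
  obtain ⟨U, hU, hzU, hloop⟩ := hX.exists_isOpen_homotopic_refl z
  refine ⟨pathComponentIn U z, hU.pathComponentIn z, mem_pathComponentIn_self hzU,
    fun p q γ₁ γ₂ h₁ h₂ => ?_⟩
  obtain ⟨α, hα⟩ : JoinedIn U z p := h₁ ⟨0, γ₁.source⟩
  have hαU : range α ⊆ U := range_subset_iff.2 hα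
  have hloopU : range ((α.trans γ₁).trans (α.trans γ₂).symm) ⊆ U := by
    simp only [Path.trans_range, Path.symm_range, union_subset_iff]
    exact ⟨⟨hαU, h₁.trans pathComponentIn_subset⟩, hαU, h₂.trans pathComponentIn_subset⟩
  have hnull := Path.Homotopic.Quotient.eq.2 (hloop _ hloopU)
  simp only [Path.Homotopic.Quotient.mk_trans, Path.Homotopic.Quotient.mk_symm,
    Path.Homotopic.Quotient.mk_refl] at hnull
  exact Path.Homotopic.Quotient.eq.1 <| Path.Homotopic.Quotient.trans_left_cancel <|
    Path.Homotopic.Quotient.eq_of_trans_symm_eq_refl hnull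

theorem eventually_homotopic_s2 [LocallyPathConnectedSpace X] (hX : SemilocallySimplyConnected X)
    {x y : X} (g : Path x y) :
    ∀ᶠ h in 𝓝 g, h.Homotopic g := by
  choose V hVo hVmem hV using hX.exists_isOpen_isRelativelySimplyConnected
  obtain ⟨t, ht₀, ht, ⟨m, htm⟩, hcover⟩ :=
    exists_monotone_Icc_subset_open_cover_unitInterval (c := fun s => g ⁻¹' V (g s))
      (fun s => (hVo _).preimage g.continuous) (fun s _ => mem_iUnion.2 ⟨s, hVmem _⟩)
  choose i hgU using hcover
  set U : ℕ → Set X := fun n => V (g (i n))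
  have hgt (n : ℕ) : g (t n) ∈ U (n - 1) ∩ U n :=
    ⟨hgU (n - 1) ⟨ht (n.sub_le 1), ht (by omega)⟩, hgU n ⟨le_rfl, ht n.le_succ⟩⟩
  have hnear : ∀ᶠ h : Path x y in 𝓝 g, (∀ n ∈ Iio m, MapsTo h (Icc (t n) (t (n + 1))) (U n)) ∧
      ∀ n ∈ Iic m, h (t n) ∈ pathComponentIn (U (n - 1) ∩ U n) (g (t n)) := by
    refine ((finite_Iio m).eventually_all.2 fun n _ => ?_).and
      ((finite_Iic m).eventually_all.2 fun n _ => ?_)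
    · exact (continuous_induced_dom.tendsto g).eventually
        (ContinuousMap.eventually_mapsTo isCompact_Icc (hVo _) (hgU n))
    · exact (continuous_eval_const (t n)).continuousAt.eventually_mem
        ((((hVo _).inter (hVo _)).pathComponentIn _).mem_nhds (mem_pathComponentIn_self (hgt n)))
  filter_upwards [hnear] with h ⟨hhU, hhP⟩
  have hjoin (n : ℕ) : JoinedIn (U (n - 1) ∩ U n) (g (t n)) (h (t n)) := by
    rcases le_or_gt n m with hn | hn
    · exact hhP n hn
    · have hend : g (t n) = h (t n) := by rw [htm n hn.le, g.target, h.target]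
      exact hend ▸ JoinedIn.refl (hgt n)
  choose β hβ using hjoin
  exact (Path.homotopic_of_subdivision ht ht₀ (htm m le_rfl) (fun n => hV _) hgU hhU β
    (fun n => range_subset_iff.2 fun s => (hβ n s).2)
    (fun n => range_subset_iff.2 fun s => (hβ (n + 1) s).1)).symm

theorem isOpen_setOf_homotopic [LocallyPathConnectedSpace X]
    (hX : SemilocallySimplyConnected X) {x y : X} (g : Path x y) :
    IsOpen {h : Path x y | h.Homotopic g} :=
  isOpen_iff_mem_nhds.2 fun h hh => (hX.eventually_homotopic_s2 h).mono fun _ hk => hk.trans hh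

end SemilocallySimplyConnected

end

theorem isOpen_singleton_of_locPathConnected_of_semilocallySimplyConnected
    {X : Type*} [TopologicalSpace X] [LocallyPathConnectedSpace X]
    (hX : SemilocallySimplyConnected X) (x : X) (f : Path x x) :
    IsOpen ({⟦f⟧} : Set (Path.Homotopic.Quotient x x)) ∧
      DiscreteTopology (Path.Homotopic.Quotient x x) := by
  have hopen (g : Path x x) : IsOpen ({⟦g⟧} : Set (Path.Homotopic.Quotient x x)) := by
    change IsOpen ({Quotient.mk' g} : Set (Quotient (Path.Homotopic.setoid x x)))
    rw [← isQuotientMap_quotient_mk'.isOpen_preimage]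
    convert hX.isOpen_setOf_homotopic g using 1
    ext h
    exact Quotient.eq
  exact ⟨hopen f, discreteTopology_iff_isOpen_singleton.2 fun q => Quotient.inductionOn q hopen⟩
end

section
/- Let X be a path connected and locally path connected topological space. Then the topological fundamental group π₁^top(X,x) is discrete for some x ∈ X if and only if X is semilocally simply-connected. -/
attribute [local instance] Path.Homotopic.setoid

/-!
Around every point `x` there is an open set `V` in which any two paths with the same endpoints are
homotopic in `X`: the path component of `x` in the neighbourhood `U` of the definition. Subdivide a
path `g` so that its pieces lie in such sets `V₀, …, V_{M-1}`, and let `f` be a path whose pieces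
lie in the same sets and whose subdivision points are joined to those of `g` inside
`V_{n-1} ∩ V_n`. This is an open condition on `f` in the compact-open topology, and the rungs turn
the strip between `f` and `g` into a ladder of squares, each inside one `V_n`, hence
null-homotopic: so every homotopy class is open and `π₁` is discrete. Conversely, if the class of
the constant loop at `x` is open, conjugating by a path from `x` to `y` shows that the
null-homotopic loops at `y` form a neighbourhood of the constant loop; in the compact-open topology
such a neighbourhood contains all loops in some open `U ∋ y`.
-/

open Set Filter Topology unitInterval

section

variable {X : Type*} [TopologicalSpace X]

def IsPathHomotopyTrivial (V : Set X) : Prop :=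
  ∀ ⦃x y : X⦄ (p q : Path x y), range p ⊆ V → range q ⊆ V → p.Homotopic q

theorem IsPathHomotopyTrivial.homotopic_cast_refl {V : Set X} (hV : IsPathHomotopyTrivial V)
    {x y z : X} (p : Path x y) (hp : range p ⊆ V) (hx : x = z) (hy : y = z) :
    p.Homotopic ((Path.refl z).cast hx hy) := by
  refine hV _ _ hp ?_
  rw [Path.cast_coe, Path.refl_range, singleton_subset_iff, ← hx, ← p.source]
  exact hp (mem_range_self 0)

namespace Path.Homotopic

theorem of_conj {z x : X} {r : Path z x} {γ : Path x x}
    (h : ((r.trans γ).trans r.symm).Homotopic (Path.refl z)) : γ.Homotopic (Path.refl x) := by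
  rw [← Quotient.eq] at h ⊢
  calc Quotient.mk γ
      = (Quotient.mk r).symm.trans ((((Quotient.mk r).trans (Quotient.mk γ)).trans
          (Quotient.mk r).symm).trans (Quotient.mk r)) := by grind
    _ = Quotient.refl x := by simp only [← Quotient.mk_trans, ← Quotient.mk_symm, h]; simp

theorem of_trans_symm {x y : X} {p q : Path x y}
    (h : (p.trans q.symm).Homotopic (Path.refl x)) : p.Homotopic q := by
  rw [← Quotient.eq] at h ⊢
  calc Quotient.mk p = ((Quotient.mk p).trans (Quotient.mk q).symm).trans (Quotient.mk q) := by
        simp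
    _ = Quotient.mk q := by simp only [← Quotient.mk_trans, ← Quotient.mk_symm, h]; simp

theorem subpath_trans_of_ladder {a b a' b' : X} {f : Path a b} {g : Path a' b'} {t : ℕ → I}
    {V : ℕ → Set X} {M : ℕ} (hV : ∀ n < M, IsPathHomotopyTrivial (V n))
    (hg : ∀ n < M, range (g.subpath (t n) (t (n + 1))) ⊆ V n)
    (hf : ∀ n < M, range (f.subpath (t n) (t (n + 1))) ⊆ V n)
    (β : ∀ n, Path (g (t n)) (f (t n))) (hβ : ∀ n < M, range (β n) ⊆ V n)
    (hβ' : ∀ n < M, range (β (n + 1)) ⊆ V n) {n : ℕ} (hn : n ≤ M) :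
    ((g.subpath (t 0) (t n)).trans (β n)).Homotopic ((β 0).trans (f.subpath (t 0) (t n))) := by
  induction n with
  | zero =>
    rw [subpath_self, subpath_self]
    exact (refl_trans _).trans (trans_refl _).symm
  | succ n ih =>
    have hsq : ((g.subpath (t n) (t (n + 1))).trans (β (n + 1))).Homotopic
        ((β n).trans (f.subpath (t n) (t (n + 1)))) := by
      apply hV n hn <;> rw [trans_range]
      exacts [union_subset (hg n hn) (hβ' n hn), union_subset (hβ n hn) (hf n hn)]
    have hsplit {c d : X} (γ : Path c d) : Quotient.mk (γ.subpath (t 0) (t (n + 1))) =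
        (Quotient.mk (γ.subpath (t 0) (t n))).trans (Quotient.mk (γ.subpath (t n) (t (n + 1)))) :=
      (Quotient.eq.mpr ⟨Homotopy.subpathTransSubpath γ _ _ _⟩).symm
    rw [← Quotient.eq] at ih hsq ⊢
    simp only [Quotient.mk_trans] at ih hsq ⊢
    rw [hsplit, hsplit, Quotient.trans_assoc, hsq, ← Quotient.trans_assoc,
      ih (Nat.le_of_succ_le hn), Quotient.trans_assoc]

theorem of_subpath_trans_s3 {a b : X} {f g : Path a b} {V W : Set X}
    (hV : IsPathHomotopyTrivial V) (hW : IsPathHomotopyTrivial W) {s u : I} (hs : s = 0)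
    (hu : u = 1) (β₀ : Path (g s) (f s)) (β₁ : Path (g u) (f u)) (hβ₀ : range β₀ ⊆ V)
    (hβ₁ : range β₁ ⊆ W) (h : ((g.subpath s u).trans β₁).Homotopic (β₀.trans (f.subpath s u))) :
    g.Homotopic f := by
  subst hs hu
  have h' := (hcomp (.refl _) (hW.homotopic_cast_refl β₁ hβ₁ g.target f.target)).symm.trans
    (h.trans (hcomp (hV.homotopic_cast_refl β₀ hβ₀ g.source f.source) (.refl _)))
  rw [subpath_zero_one, subpath_zero_one, ← Path.cast_trans, ← Path.cast_trans] at h'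
  exact (trans_refl g).symm.trans ((h'.pathCast g.source.symm f.target.symm).trans (refl_trans f))

theorem of_subdivision {a b : X} {f g : Path a b} {t : ℕ → I} {V : ℕ → Set X} {M : ℕ}
    (ht0 : t 0 = 0) (hmono : Monotone t) (htM : ∀ n ≥ M, t n = 1)
    (hV : ∀ n, IsPathHomotopyTrivial (V n))
    (hg : ∀ n < M, MapsTo g (Icc (t n) (t (n + 1))) (V n))
    (hf : ∀ n < M, MapsTo f (Icc (t n) (t (n + 1))) (V n))
    (hgf : ∀ n, JoinedIn (V (n - 1) ∩ V n) (g (t n)) (f (t n))) : g.Homotopic f := by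
  let β n := (hgf n).somePath
  have hβ n : range (β n) ⊆ V (n - 1) ∩ V n := by
    rintro _ ⟨s, rfl⟩
    exact (hgf n).somePath_mem s
  have hsub {c d : X} (γ : Path c d) (hγ : ∀ n < M, MapsTo γ (Icc (t n) (t (n + 1))) (V n))
      (n : ℕ) (hn : n < M) : range (γ.subpath (t n) (t (n + 1))) ⊆ V n := by
    rw [range_subpath_of_le _ _ _ (hmono n.le_succ)]
    exact (hγ n hn).image_subset
  refine of_subpath_trans_s3 (hV 0) (hV M) ht0 (htM M le_rfl) (β 0) (β M)
    ((hβ 0).trans inter_subset_right) ((hβ M).trans inter_subset_right)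
    (subpath_trans_of_ladder (fun n _ => hV n) (hsub g hg) (hsub f hf) β
      (fun n _ => (hβ n).trans inter_subset_right)
      (fun n _ => (hβ (n + 1)).trans inter_subset_left) le_rfl)

end Path.Homotopic

theorem Path.exists_isOpen_forall_range_subset_mem {y : X} {N : Set (Path y y)}
    (hN : N ∈ 𝓝 (Path.refl y)) :
    ∃ U : Set X, IsOpen U ∧ y ∈ U ∧ ∀ γ : Path y y, range γ ⊆ U → γ ∈ N := by
  obtain ⟨N', hN', hN'N⟩ := mem_nhds_induced _ _ _ |>.mp hN
  obtain ⟨⟨K, U⟩, ⟨-, hyU, hU⟩, hKU⟩ :=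
    (nhds_basis_opens y).nhds_continuousMapConst (X := I) |>.mem_iff.mp hN'
  exact ⟨U, hU, hyU, fun γ hγ => hN'N (hKU fun t _ => hγ (mem_range_self t))⟩

theorem semilocallySimplyConnected_iff :
    SemilocallySimplyConnected X ↔ ∀ x : X, ∃ U : Set X, IsOpen U ∧ x ∈ U ∧
      ∀ γ : Path x x, range γ ⊆ U → γ.Homotopic (Path.refl x) := by
  refine forall_congr' fun x => ⟨fun ⟨U, hU, hx, h⟩ => ⟨U, hU, hx, fun γ hγ => ?_⟩,
    fun ⟨U, hU, hx, h⟩ => ⟨U, hU, hx, fun γ => h _ ?_⟩⟩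
  · exact h ⟨⟨fun t => ⟨γ t, hγ (mem_range_self t)⟩, by fun_prop⟩,
      Subtype.ext γ.source, Subtype.ext γ.target⟩
  · rintro _ ⟨t, rfl⟩
    exact (γ t).2

theorem semilocallySimplyConnected_of_discreteTopology [PathConnectedSpace X] (x₀ : X)
    [DiscreteTopology (Path.Homotopic.Quotient x₀ x₀)] : SemilocallySimplyConnected X := by
  refine semilocallySimplyConnected_iff.mpr fun y => ?_
  let p : Path x₀ y := (PathConnectedSpace.joined x₀ y).somePath
  have hnull : IsOpen {γ : Path y y | ((p.trans γ).trans p.symm).Homotopic (Path.refl x₀)} := by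
    have h := (isOpen_discrete {Path.Homotopic.Quotient.mk (Path.refl x₀)}).preimage
      (continuous_quotient_mk'.comp (by fun_prop : Continuous fun γ : Path y y =>
        (p.trans γ).trans p.symm))
    convert h using 1
    ext γ
    exact Path.Homotopic.Quotient.eq.symm
  obtain ⟨U, hU, hyU, hUnull⟩ := Path.exists_isOpen_forall_range_subset_mem
    (hnull.mem_nhds (Path.Homotopic.trans_refl p |>.hcomp (.refl _) |>.trans
      (Path.Homotopic.trans_symm p)))
  exact ⟨U, hU, hyU, fun γ hγ => .of_conj (hUnull γ hγ)⟩

namespace SemilocallySimplyConnected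

variable [LocallyPathConnectedSpace X]

theorem exists_isOpen_isPathHomotopyTrivial (hX : SemilocallySimplyConnected X) (z : X) :
    ∃ V : Set X, IsOpen V ∧ z ∈ V ∧ IsPathHomotopyTrivial V := by
  obtain ⟨U, hU, hz, hloop⟩ := semilocallySimplyConnected_iff.mp hX z
  refine ⟨pathComponentIn U z, hU.pathComponentIn z, mem_pathComponentIn_self hz,
    fun x y p q hp hq => ?_⟩
  have hzx : JoinedIn U z x := p.source ▸ hp (mem_range_self 0)
  refine .of_trans_symm (.of_conj (r := hzx.somePath) (hloop _ ?_))
  simp only [Path.trans_range, Path.symm_range]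
  refine union_subset (union_subset ?_ ?_) ?_
  · rintro _ ⟨t, rfl⟩; exact hzx.somePath_mem t
  · exact union_subset (hp.trans pathComponentIn_subset) (hq.trans pathComponentIn_subset)
  · rintro _ ⟨t, rfl⟩; exact hzx.somePath_mem t

theorem eventually_homotopic_s3 (hX : SemilocallySimplyConnected X) {a b : X} (g : Path a b) :
    ∀ᶠ f in 𝓝 g, g.Homotopic f := by
  choose V hVo hgV hVt using hX.exists_isOpen_isPathHomotopyTrivial
  obtain ⟨t, ht0, hmono, ⟨M, htM⟩, hcover⟩ := exists_monotone_Icc_subset_open_cover_unitInterval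
    (fun z => (hVo z).preimage g.continuous) (fun s _ => mem_iUnion.mpr ⟨g s, hgV (g s)⟩)
  choose z hz using hcover
  -- `0 - 1 = 0` in `ℕ`, so at `n = 0` this only says `g (t 0) ∈ V (z 0)`.
  have hgt : ∀ n, g (t n) ∈ V (z (n - 1)) ∩ V (z n)
    | 0 => ⟨hz 0 ⟨le_rfl, hmono (Nat.zero_le 1)⟩, hz 0 ⟨le_rfl, hmono (Nat.zero_le 1)⟩⟩
    | n + 1 => ⟨hz n ⟨hmono n.le_succ, le_rfl⟩, hz (n + 1) ⟨le_rfl, hmono (n + 1).le_succ⟩⟩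
  have hnear : ∀ᶠ f : Path a b in 𝓝 g, ∀ n < M, MapsTo f (Icc (t n) (t (n + 1))) (V (z n)) ∧
      JoinedIn (V (z (n - 1)) ∩ V (z n)) (g (t n)) (f (t n)) := by
    refine (finite_lt_nat M).eventually_all.mpr fun n _ => .and ?_ ?_
    · exact (continuous_induced_dom.tendsto g).eventually
        (ContinuousMap.eventually_mapsTo isCompact_Icc (hVo _) (hz n))
    · exact (continuous_eval_const (t n)).continuousAt.eventually_mem
        ((((hVo _).inter (hVo _)).pathComponentIn _).mem_nhds (mem_pathComponentIn_self (hgt n)))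
  filter_upwards [hnear] with f hf
  refine .of_subdivision ht0 hmono htM (fun n => hVt (z n)) (fun n _ => hz n)
    (fun n hn => (hf n hn).1) fun n => ?_
  rcases lt_or_ge n M with hn | hn
  · exact (hf n hn).2
  · rw [show f (t n) = g (t n) by rw [htM n hn, f.target, g.target]]
    exact .refl (hgt n)

theorem discreteTopology_s3 (hX : SemilocallySimplyConnected X) (x y : X) :
    DiscreteTopology (Path.Homotopic.Quotient x y) := by
  refine discreteTopology_iff_isOpen_singleton.mpr fun q => ?_
  induction q using Path.Homotopic.Quotient.ind with | mk g => ?_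
  refine isQuotientMap_quotient_mk'.isOpen_preimage.mp <| isOpen_iff_eventually.mpr fun f hf =>
    (hX.eventually_homotopic_s3 f).mono fun f' hf' => ?_
  exact (Quotient.sound hf'.symm).trans hf

end SemilocallySimplyConnected

end

theorem exists_discrete_iff_semilocally_simply_connected
    (X : Type*) [TopologicalSpace X] [PathConnectedSpace X] [LocallyPathConnectedSpace X] :
    (∃ x : X, DiscreteTopology (Path.Homotopic.Quotient x x)) ↔
      SemilocallySimplyConnected X :=
  ⟨fun ⟨x, _⟩ => semilocallySimplyConnected_of_discreteTopology x,
    fun hX => ⟨Classical.arbitrary X, hX.discreteTopology_s3 _ _⟩⟩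
end

section
/- If (X,x) is a pointed topological space, then the topological fundamental group π₁^top(X,x) is a homogeneous space: for any two elements a, b ∈ π₁^top(X,x) there exists a homeomorphism h : π₁^top(X,x) → π₁^top(X,x) with h(a) = b. -/
attribute [local instance] Path.Homotopic.setoid

/-!
The topological fundamental group need not be a topological group, but left translations are
still homeomorphisms: concatenation of paths is continuous on the path space and descends to the
quotient, and translating by `b · a⁻¹` sends `a` to `b`.
-/

namespace Path.Homotopic.Quotient

variable {X : Type*} [TopologicalSpace X] {x₀ x₁ x₂ : X}

theorem continuous_trans_left (γ : Path.Homotopic.Quotient x₀ x₁) :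
    Continuous (trans γ : Path.Homotopic.Quotient x₁ x₂ → Path.Homotopic.Quotient x₀ x₂) := by
  induction γ using Path.Homotopic.Quotient.ind with | mk γ =>
  refine isQuotientMap_quotient_mk'.continuous_iff.mpr ?_
  exact continuous_quotient_mk'.comp
    (Path.continuous_trans.comp (continuous_const.prodMk continuous_id))

@[simps]
noncomputable def transLeftHomeomorph (γ : Path.Homotopic.Quotient x₀ x₁) :
    Path.Homotopic.Quotient x₁ x₂ ≃ₜ Path.Homotopic.Quotient x₀ x₂ where
  toFun := trans γ
  invFun := trans γ.symm
  left_inv p := by simp [← trans_assoc]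
  right_inv p := by simp [← trans_assoc]
  continuous_toFun := continuous_trans_left γ
  continuous_invFun := continuous_trans_left γ.symm

end Path.Homotopic.Quotient

theorem topological_fundamental_group_homogeneous
    {X : Type*} [TopologicalSpace X] (x : X)
    (a b : Path.Homotopic.Quotient x x) :
    ∃ h : Path.Homotopic.Quotient x x ≃ₜ Path.Homotopic.Quotient x x, h a = b :=
  ⟨Path.Homotopic.Quotient.transLeftHomeomorph (b.trans a.symm), by simp⟩
end

section
/- Let (X,x) be a pointed topological space and let [f] ∈ π₁^top(X,x). Then right translation R_[f] : π₁^top(X,x) → π₁^top(X,x), [g] ↦ [g]·[f], is a homeomorphism of π₁^top(X,x). -/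
attribute [local instance] Path.Homotopic.setoid

/-!
Concatenation of paths is continuous in the compact-open topology, so right translation by a class
`[γ]` lifts to the continuous map `p ↦ p · γ` on path spaces and is therefore continuous on the
quotient. Right translation by `[γ]⁻¹` is a continuous inverse.
-/

namespace Path.Homotopic.Quotient

variable {X : Type*} [TopologicalSpace X] {x₀ x₁ x₂ : X}

theorem continuous_trans_right (γ : Path.Homotopic.Quotient x₁ x₂) :
    Continuous fun g : Path.Homotopic.Quotient x₀ x₁ => g.trans γ := by
  induction γ with | mk q =>
  refine (isQuotientMap_quotient_mk' (s := Path.Homotopic.setoid x₀ x₁)).continuous_iff.mpr ?_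
  exact continuous_quotient_mk'.comp (continuous_id.path_trans continuous_const)

noncomputable def transRightHomeomorph (γ : Path.Homotopic.Quotient x₁ x₂) :
    Path.Homotopic.Quotient x₀ x₁ ≃ₜ Path.Homotopic.Quotient x₀ x₂ where
  toFun g := g.trans γ
  invFun g := g.trans γ.symm
  left_inv g := by simp
  right_inv g := by simp
  continuous_toFun := continuous_trans_right γ
  continuous_invFun := continuous_trans_right γ.symm

end Path.Homotopic.Quotient

theorem right_translation_isHomeomorph
    {X : Type*} [TopologicalSpace X] (x : X) (f : Path.Homotopic.Quotient x x) :
    IsHomeomorph (fun g : Path.Homotopic.Quotient x x => Path.Homotopic.Quotient.trans g f) :=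
  (Path.Homotopic.Quotient.transRightHomeomorph f).isHomeomorph
end
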